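/- There exists an absolute constant C > 0 with the following property. Let γ ∈ ℝ, let φ₁ : ℝ → ℝ be continuously differentiable with φ₁ and ∂_x φ₁ in L²(ℝ), and let φ₂ : ℝ → ℂ be continuously differentiable with φ₂ and ∂_x φ₂ in L²(ℝ). Then the function x ↦ e^{i γ φ₁(x)} φ₂(x) satisfies ‖e^{iγφ₁} φ₂‖_{H¹} ≤ C (1 + |γ|) (1 + ‖φ₁‖_{H¹}) ‖φ₂‖_{H¹}. -/

import Mathlib

/-!
The constant `C = 2` works. The phase `e^{iγφ₁}` has modulus one, so it leaves `‖φ₂‖_{L²}`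
unchanged, and `(e^{iγφ₁} φ₂)' = e^{iγφ₁} (iγ φ₁' φ₂ + φ₂')`. In the first term `φ₂` is bounded
pointwise by `‖φ₂‖_{H¹}` (the embedding `H¹(ℝ) ⊆ L^∞(ℝ)`: `‖φ₂(x)‖²` is the integral of its
derivative `2⟪φ₂, φ₂'⟫` over `(-∞, x]`), and `φ₁'` is bounded in `L²` by `‖φ₁‖_{H¹}`.
-/

open MeasureTheory Complex

/-- The `H¹` norm `‖f‖_{H¹} = (‖f‖_{L²}² + ‖∂ₓf‖_{L²}²)^{1/2}`. -/
noncomputable def H1norm {E : Type*} [NormedAddCommGroup E] [NormedSpace ℝ E] (f : ℝ → E) : ℝ :=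
  (((eLpNorm f 2 volume).toReal) ^ 2 + ((eLpNorm (deriv f) 2 volume).toReal) ^ 2) ^ ((1:ℝ)/2)

open Filter Set Topology
open scoped ENNReal RealInnerProductSpace

section LpBounds

variable {α : Type*} [MeasurableSpace α] {μ : Measure α}

theorem sq_toReal_eLpNorm_two {E : Type*} [NormedAddCommGroup E] {f : α → E}
    (hf : MemLp f 2 μ) : (eLpNorm f 2 μ).toReal ^ 2 = ∫ x, ‖f x‖ ^ 2 ∂μ := by
  have h := hf.eLpNorm_eq_integral_rpow_norm two_ne_zero ENNReal.ofNat_ne_top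
  have hI : 0 ≤ ∫ x, ‖f x‖ ^ (2 : ℝ) ∂μ := integral_nonneg fun x => by positivity
  rw [ENNReal.toReal_ofNat] at h
  rw [h, ENNReal.toReal_ofReal (by positivity), ← Real.rpow_natCast, ← Real.rpow_mul hI]
  norm_num

theorem toReal_eLpNorm_le_of_norm_le_mul_add {E F G : Type*} [NormedAddCommGroup E]
    [NormedAddCommGroup F] [NormedAddCommGroup G] {p : ℝ≥0∞} (hp : 1 ≤ p)
    {h : α → E} {u : α → F} {v : α → G} {a : ℝ} (ha : 0 ≤ a) (hu : MemLp u p μ)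
    (hv : MemLp v p μ) (hle : ∀ x, ‖h x‖ ≤ a * ‖u x‖ + ‖v x‖) :
    (eLpNorm h p μ).toReal ≤ a * (eLpNorm u p μ).toReal + (eLpNorm v p μ).toReal := by
  have hau : eLpNorm (fun x => a * ‖u x‖) p μ = ENNReal.ofReal a * eLpNorm u p μ := by
    have h := eLpNorm_const_smul a (fun x => ‖u x‖) p μ
    rwa [eLpNorm_norm, Real.enorm_of_nonneg ha] at h
  have hbound : eLpNorm h p μ ≤ ENNReal.ofReal a * eLpNorm u p μ + eLpNorm v p μ :=
    calc eLpNorm h p μ ≤ eLpNorm (fun x => a * ‖u x‖ + ‖v x‖) p μ := eLpNorm_mono_real hle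
      _ ≤ eLpNorm (fun x => a * ‖u x‖) p μ + eLpNorm (fun x => ‖v x‖) p μ :=
        eLpNorm_add_le (hu.norm.const_mul a).1 hv.norm.1 hp
      _ = ENNReal.ofReal a * eLpNorm u p μ + eLpNorm v p μ := by rw [hau, eLpNorm_norm]
  have hfin : ENNReal.ofReal a * eLpNorm u p μ ≠ ⊤ :=
    ENNReal.mul_ne_top ENNReal.ofReal_ne_top hu.2.ne
  calc (eLpNorm h p μ).toReal ≤ (ENNReal.ofReal a * eLpNorm u p μ + eLpNorm v p μ).toReal :=
        ENNReal.toReal_mono (ENNReal.add_ne_top.2 ⟨hfin, hv.2.ne⟩) hbound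
    _ = a * (eLpNorm u p μ).toReal + (eLpNorm v p μ).toReal := by
        rw [ENNReal.toReal_add hfin hv.2.ne, ENNReal.toReal_mul, ENNReal.toReal_ofReal ha]

end LpBounds

section H1norm

variable {E : Type*} [NormedAddCommGroup E] [NormedSpace ℝ E]

theorem H1norm_eq_sqrt (f : ℝ → E) :
    H1norm f = √((eLpNorm f 2 volume).toReal ^ 2 + (eLpNorm (deriv f) 2 volume).toReal ^ 2) := by
  rw [H1norm, Real.sqrt_eq_rpow]

theorem H1norm_nonneg (f : ℝ → E) : 0 ≤ H1norm f := by
  rw [H1norm_eq_sqrt]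
  positivity

theorem toReal_eLpNorm_le_H1norm (f : ℝ → E) : (eLpNorm f 2 volume).toReal ≤ H1norm f := by
  rw [H1norm_eq_sqrt]
  exact Real.le_sqrt_of_sq_le (le_add_of_nonneg_right (by positivity))

theorem toReal_eLpNorm_deriv_le_H1norm (f : ℝ → E) :
    (eLpNorm (deriv f) 2 volume).toReal ≤ H1norm f := by
  rw [H1norm_eq_sqrt]
  exact Real.le_sqrt_of_sq_le (le_add_of_nonneg_left (by positivity))

theorem H1norm_le_add (f : ℝ → E) :
    H1norm f ≤ (eLpNorm f 2 volume).toReal + (eLpNorm (deriv f) 2 volume).toReal := by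
  rw [H1norm_eq_sqrt]
  have h₁ := ENNReal.toReal_nonneg (a := eLpNorm f 2 volume)
  have h₂ := ENNReal.toReal_nonneg (a := eLpNorm (deriv f) 2 volume)
  exact Real.sqrt_le_iff.mpr ⟨by positivity, by nlinarith⟩

end H1norm

section Sobolev

variable {E : Type*} [NormedAddCommGroup E] [InnerProductSpace ℝ E]

theorem norm_sq_le_integral_norm_sq_add_norm_deriv_sq {f : ℝ → E} (hf : Differentiable ℝ f)
    (hf₂ : MemLp f 2 volume) (hf'₂ : MemLp (deriv f) 2 volume) (x : ℝ) :
    ‖f x‖ ^ 2 ≤ ∫ y, ‖f y‖ ^ 2 + ‖deriv f y‖ ^ 2 := by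
  have hderiv : ∀ y, HasDerivAt (‖f ·‖ ^ 2) (2 * ⟪f y, deriv f y⟫) y :=
    fun y => (hf y).hasDerivAt.norm_sq
  have hsq : Integrable (fun y => ‖f y‖ ^ 2) :=
    (memLp_two_iff_integrable_sq_norm hf₂.1).1 hf₂
  have hsum : Integrable (fun y => ‖f y‖ ^ 2 + ‖deriv f y‖ ^ 2) :=
    hsq.add ((memLp_two_iff_integrable_sq_norm hf'₂.1).1 hf'₂)
  have hbound : ∀ y, |2 * ⟪f y, deriv f y⟫| ≤ ‖f y‖ ^ 2 + ‖deriv f y‖ ^ 2 := fun y =>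
    calc |2 * ⟪f y, deriv f y⟫| ≤ 2 * ‖f y‖ * ‖deriv f y‖ := by
          rw [abs_mul, abs_two, mul_assoc]
          gcongr
          exact abs_real_inner_le_norm _ _
      _ ≤ ‖f y‖ ^ 2 + ‖deriv f y‖ ^ 2 := two_mul_le_add_sq _ _
  have hderiv_int : Integrable (fun y => 2 * ⟪f y, deriv f y⟫) :=
    hsum.mono' ((hf₂.1.inner hf'₂.1).const_mul 2) (Eventually.of_forall hbound)
  have hlim : Tendsto (‖f ·‖ ^ 2) atBot (𝓝 0) :=
    tendsto_zero_of_hasDerivAt_of_integrableOn_Iic (a := x) (fun y _ => hderiv y)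
      hderiv_int.integrableOn hsq.integrableOn
  calc ‖f x‖ ^ 2 = ∫ y in Iic x, 2 * ⟪f y, deriv f y⟫ := by
        rw [integral_Iic_of_hasDerivAt_of_tendsto' (fun y _ => hderiv y)
          hderiv_int.integrableOn hlim, sub_zero]
    _ ≤ ∫ y in Iic x, ‖f y‖ ^ 2 + ‖deriv f y‖ ^ 2 :=
        setIntegral_mono hderiv_int.integrableOn hsum.integrableOn
          fun y => (le_abs_self _).trans (hbound y)
    _ ≤ ∫ y, ‖f y‖ ^ 2 + ‖deriv f y‖ ^ 2 :=
        setIntegral_le_integral hsum (Eventually.of_forall fun y => by positivity)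

theorem norm_le_H1norm {f : ℝ → E} (hf : Differentiable ℝ f) (hf₂ : MemLp f 2 volume)
    (hf'₂ : MemLp (deriv f) 2 volume) (x : ℝ) : ‖f x‖ ≤ H1norm f := by
  have h := norm_sq_le_integral_norm_sq_add_norm_deriv_sq hf hf₂ hf'₂ x
  rw [integral_add ((memLp_two_iff_integrable_sq_norm hf₂.1).1 hf₂)
    ((memLp_two_iff_integrable_sq_norm hf'₂.1).1 hf'₂), ← sq_toReal_eLpNorm_two hf₂,
    ← sq_toReal_eLpNorm_two hf'₂] at h
  simpa [H1norm_eq_sqrt] using Real.abs_le_sqrt h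

end Sobolev

section Phase

theorem norm_exp_I_mul_ofReal_mul_ofReal (γ r : ℝ) : ‖Complex.exp (I * (γ : ℂ) * (r : ℂ))‖ = 1 := by
  rw [show I * (γ : ℂ) * (r : ℂ) = ((γ * r : ℝ) : ℂ) * I by push_cast; ring]
  exact norm_exp_ofReal_mul_I _

theorem eLpNorm_exp_I_mul_mul {α : Type*} [MeasurableSpace α] (μ : Measure α) {γ : ℝ} {φ : α → ℝ}
    {f : α → ℂ} (p : ℝ≥0∞) :
    eLpNorm (fun y => Complex.exp (I * (γ : ℂ) * (φ y : ℂ)) * f y) p μ = eLpNorm f p μ :=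
  eLpNorm_congr_norm_ae (Eventually.of_forall fun y => by
    simp only [norm_mul, norm_exp_I_mul_ofReal_mul_ofReal, one_mul])

variable {γ : ℝ} {φ : ℝ → ℝ} {f : ℝ → ℂ}

theorem HasDerivAt.exp_I_mul_mul {φ' : ℝ} {f' : ℂ} {x : ℝ} (hφ : HasDerivAt φ φ' x)
    (hf : HasDerivAt f f' x) :
    HasDerivAt (fun y => Complex.exp (I * (γ : ℂ) * (φ y : ℂ)) * f y)
      (Complex.exp (I * (γ : ℂ) * (φ x : ℂ)) * (I * (γ : ℂ) * (φ' : ℂ) * f x + f')) x := by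
  have hphase := (hφ.ofReal_comp.const_mul (I * (γ : ℂ))).cexp
  exact (hphase.mul hf).congr_deriv (by ring)

theorem norm_deriv_exp_I_mul_mul_le (hφ : Differentiable ℝ φ) (hf : Differentiable ℝ f)
    (x : ℝ) :
    ‖deriv (fun y => Complex.exp (I * (γ : ℂ) * (φ y : ℂ)) * f y) x‖ ≤
      |γ| * ‖f x‖ * ‖deriv φ x‖ + ‖deriv f x‖ := by
  rw [((hφ x).hasDerivAt.exp_I_mul_mul (hf x).hasDerivAt).deriv, norm_mul,
    norm_exp_I_mul_ofReal_mul_ofReal, one_mul]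
  refine (norm_add_le _ _).trans (le_of_eq ?_)
  simp only [norm_mul, norm_I, norm_real, one_mul, Real.norm_eq_abs]
  ring

theorem toReal_eLpNorm_deriv_exp_I_mul_mul_le (hφ : Differentiable ℝ φ)
    (hf : Differentiable ℝ f) (hφ'₂ : MemLp (deriv φ) 2 volume) (hf'₂ : MemLp (deriv f) 2 volume)
    {M : ℝ} (hfM : ∀ x, ‖f x‖ ≤ M) :
    (eLpNorm (deriv fun y => Complex.exp (I * (γ : ℂ) * (φ y : ℂ)) * f y) 2 volume).toReal ≤
      |γ| * M * (eLpNorm (deriv φ) 2 volume).toReal + (eLpNorm (deriv f) 2 volume).toReal :=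
  toReal_eLpNorm_le_of_norm_le_mul_add one_le_two
    (mul_nonneg (abs_nonneg γ) ((norm_nonneg _).trans (hfM 0))) hφ'₂ hf'₂ fun x => (norm_deriv_exp_I_mul_mul_le hφ hf x).trans (by gcongr; exact hfM x)

end Phase

/-- `‖e^{iγφ₁} φ₂‖_{H¹} ≤ C (1+|γ|)(1+‖φ₁‖_{H¹}) ‖φ₂‖_{H¹}`. -/
theorem exp_mul_H1_bound :
    ∃ C > 0, ∀ (γ : ℝ) (φ₁ : ℝ → ℝ) (φ₂ : ℝ → ℂ),
      ContDiff ℝ 1 φ₁ → MemLp φ₁ 2 volume → MemLp (deriv φ₁) 2 volume →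
      ContDiff ℝ 1 φ₂ → MemLp φ₂ 2 volume → MemLp (deriv φ₂) 2 volume →
      H1norm (fun x => Complex.exp (Complex.I * (↑γ:ℂ) * (↑(φ₁ x):ℂ)) * φ₂ x)
        ≤ C * (1 + |γ|) * (1 + H1norm φ₁) * H1norm φ₂ := by
  refine ⟨2, two_pos, fun γ φ₁ φ₂ hφ₁ _ hφ₁'₂ hφ₂ hφ₂₂ hφ₂'₂ => ?_⟩
  set g := fun x => Complex.exp (Complex.I * (↑γ:ℂ) * (↑(φ₁ x):ℂ)) * φ₂ x
  set M := H1norm φ₂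
  have hM : 0 ≤ M := H1norm_nonneg φ₂
  have hdiff₁ := hφ₁.differentiable one_ne_zero
  have hdiff₂ := hφ₂.differentiable one_ne_zero
  have hsup : ∀ x, ‖φ₂ x‖ ≤ M := norm_le_H1norm hdiff₂ hφ₂₂ hφ₂'₂
  have hg : (eLpNorm g 2 volume).toReal ≤ M := by
    rw [eLpNorm_exp_I_mul_mul]
    exact toReal_eLpNorm_le_H1norm φ₂
  have hg' : (eLpNorm (deriv g) 2 volume).toReal ≤ |γ| * M * H1norm φ₁ + M := by
    refine (toReal_eLpNorm_deriv_exp_I_mul_mul_le hdiff₁ hdiff₂ hφ₁'₂ hφ₂'₂ hsup).trans ?_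
    gcongr
    · exact toReal_eLpNorm_deriv_le_H1norm φ₁
    · exact toReal_eLpNorm_deriv_le_H1norm φ₂
  calc H1norm g ≤ (eLpNorm g 2 volume).toReal + (eLpNorm (deriv g) 2 volume).toReal :=
        H1norm_le_add g
    _ ≤ M + (|γ| * M * H1norm φ₁ + M) := add_le_add hg hg'
    _ ≤ 2 * (1 + |γ|) * (1 + H1norm φ₁) * M := by
        have hγ := abs_nonneg γ
        have hN := H1norm_nonneg φ₁
        nlinarith [mul_nonneg hγ hM, mul_nonneg hN hM, mul_nonneg (mul_nonneg hγ hN) hM]
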